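/- arXiv:math/0612363 — 3 statements merged into one kernel-verified Lean document; each statement's English description precedes it below -/
import Mathlib

section
/- Let C and D be groupoids and π : D ⥤ C a functor. Call a set S of morphisms of D multiplicative over π if for every pair of composable morphisms f : x ⟶ y and g : y ⟶ z of C, the set of members of S mapped by π to the composite f ≫ g coincides with the set of all composites h ≫ k where h and k are composable morphisms of D belonging to S with π(h) = f and π(k) = g. If S is multiplicative over π, then for every morphism γ : x ⟶ y of C: (a) the set of codomain objects of members of S mapped by π to γ equals the set of codomain objects of members of S mapped by π to the identity 𝟙_y; and (b) the set of domain objects of members of S mapped by π to γ equals the set of domain objects of members of S mapped by π to the identity 𝟙_x. -/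
open CategoryTheory

/-- If a set `S` of morphisms of a groupoid `D` is multiplicative over a
functor `π : D ⥤ C` between groupoids, then for every morphism `γ : x ⟶ y` of `C`, the
codomain objects of members of `S` over `γ` coincide with those over `𝟙 y`, and the
domain objects of members of `S` over `γ` coincide with those over `𝟙 x`. -/
theorem stmt0 {C D : Type*} [Groupoid C] [Groupoid D] (π : D ⥤ C)
    (S : Set (Arrow D))
    (hmul : ∀ {x y z : C} (f : x ⟶ y) (g : y ⟶ z),
      {a : Arrow D | a ∈ S ∧ π.mapArrow.obj a = Arrow.mk (f ≫ g)} =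
      {a : Arrow D | ∃ h ∈ S, ∃ k ∈ S, ∃ e : h.right = k.left,
        π.mapArrow.obj h = Arrow.mk f ∧ π.mapArrow.obj k = Arrow.mk g ∧
        a = Arrow.mk (h.hom ≫ eqToHom e ≫ k.hom)}) :
    ∀ {x y : C} (γ : x ⟶ y),
      ({b : D | ∃ a ∈ S, π.mapArrow.obj a = Arrow.mk γ ∧ a.right = b} =
        {b : D | ∃ a ∈ S, π.mapArrow.obj a = Arrow.mk (𝟙 y) ∧ a.right = b}) ∧
      ({b : D | ∃ a ∈ S, π.mapArrow.obj a = Arrow.mk γ ∧ a.left = b} =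
        {b : D | ∃ a ∈ S, π.mapArrow.obj a = Arrow.mk (𝟙 x) ∧ a.left = b}) := by
  intro x y γ
  have decomp : ∀ {u v w : C} (f : u ⟶ v) (g : v ⟶ w) (a : Arrow D),
      a ∈ S → π.mapArrow.obj a = Arrow.mk (f ≫ g) →
      ∃ h ∈ S, ∃ k ∈ S, ∃ e : h.right = k.left,
        π.mapArrow.obj h = Arrow.mk f ∧ π.mapArrow.obj k = Arrow.mk g ∧
        a = Arrow.mk (h.hom ≫ eqToHom e ≫ k.hom) := by
    intro u v w f g a haS haπ
    have : a ∈ {a : Arrow D | a ∈ S ∧ π.mapArrow.obj a = Arrow.mk (f ≫ g)} := ⟨haS, haπ⟩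
    rw [hmul f g] at this
    exact this
  constructor
  · ext b
    simp only [Set.mem_setOf_eq]
    constructor
    · rintro ⟨a, haS, haπ, rfl⟩
      obtain ⟨h, hS, k, kS, e, hπ, kπ, hak⟩ := decomp γ (𝟙 y) a haS (by
        rw [Category.comp_id]; exact haπ)
      exact ⟨k, kS, kπ, by rw [hak]; rfl⟩
    · rintro ⟨a, haS, haπ, rfl⟩
      obtain ⟨h, hS, k, kS, e, hπ, kπ, hak⟩ := decomp (Groupoid.inv γ) γ a haS (by
        rw [Groupoid.inv_comp]; exact haπ)
      exact ⟨k, kS, kπ, by rw [hak]; rfl⟩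
  · ext b
    simp only [Set.mem_setOf_eq]
    constructor
    · rintro ⟨a, haS, haπ, rfl⟩
      obtain ⟨h, hS, k, kS, e, hπ, kπ, hak⟩ := decomp (𝟙 x) γ a haS (by
        rw [Category.id_comp]; exact haπ)
      exact ⟨h, hS, hπ, by rw [hak]; rfl⟩
    · rintro ⟨a, haS, haπ, rfl⟩
      obtain ⟨h, hS, k, kS, e, hπ, kπ, hak⟩ := decomp γ (Groupoid.inv γ) a haS (by
        rw [Groupoid.comp_inv]; exact haπ)
      exact ⟨h, hS, hπ, by rw [hak]; rfl⟩
end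

section
/- Let E be a finite-dimensional real vector space and # : E* → E a linear map. On Σ := E* × E, call a pair ((w,ζ),(w',ζ')) composable if ζ − (1/2)·#(w) = ζ' + (1/2)·#(w'), and define the product of a composable pair by (w,ζ)·(w',ζ') := (w + w', ζ − (1/2)·#(w')). Let F₀ ⊆ E be a linear subspace, let ann F₀ := {w ∈ E* | w(ζ) = 0 for all ζ ∈ F₀}, and set F := (ann F₀) × F₀ ⊆ Σ. Then the following are equivalent: (a) the product of every composable pair of elements of F lies in F, and every element of F is the product of some composable pair of elements of F; (b) #(ann F₀) ⊆ F₀. -/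
/-- For the symplectic groupoid `Σ = E* × E` of a constant Poisson structure
`# : E* → E` (composability: `ζ - (1/2)#w = ζ' + (1/2)#w'`; product
`(w,ζ)·(w',ζ') = (w+w', ζ - (1/2)#w')`), the set `F = (ann F₀) × F₀` is multiplicatively
closed with every element a product of composable elements of `F` if and only if
`#(ann F₀) ⊆ F₀` (i.e. `F₀` is coisotropic). -/
theorem stmt3 {E : Type*} [AddCommGroup E] [Module ℝ E] [FiniteDimensional ℝ E]
    (sharp : Module.Dual ℝ E →ₗ[ℝ] E) (F₀ : Submodule ℝ E)
    (ann : Set (Module.Dual ℝ E)) (hann : ann = {w : Module.Dual ℝ E | ∀ ζ ∈ F₀, w ζ = 0})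
    (F : Set (Module.Dual ℝ E × E)) (hF : F = ann ×ˢ (F₀ : Set E)) :
    ((∀ p ∈ F, ∀ q ∈ F,
        p.2 - ((1 : ℝ) / 2) • sharp p.1 = q.2 + ((1 : ℝ) / 2) • sharp q.1 →
        (p.1 + q.1, p.2 - ((1 : ℝ) / 2) • sharp q.1) ∈ F) ∧
      (∀ r ∈ F, ∃ p ∈ F, ∃ q ∈ F,
        p.2 - ((1 : ℝ) / 2) • sharp p.1 = q.2 + ((1 : ℝ) / 2) • sharp q.1 ∧
        r = (p.1 + q.1, p.2 - ((1 : ℝ) / 2) • sharp q.1))) ↔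
    (∀ w ∈ ann, sharp w ∈ F₀) := by
  subst hann hF
  constructor
  · rintro ⟨_, hsurj⟩ w hw
    obtain ⟨p, ⟨hpa, hpF⟩, q, ⟨hqa, hqF⟩, hcomp, hr⟩ :=
      hsurj (w, 0) ⟨hw, F₀.zero_mem⟩
    obtain ⟨hw1, hw2⟩ := Prod.mk.injEq .. ▸ hr
    have hp2 : p.2 = ((1:ℝ)/2) • sharp q.1 := eq_of_sub_eq_zero hw2.symm
    have hb : sharp q.1 ∈ F₀ := by
      have h2 : sharp q.1 = (2:ℝ) • p.2 := by rw [hp2, smul_smul]; norm_num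
      rw [h2]; exact F₀.smul_mem _ hpF
    have ha : sharp p.1 ∈ F₀ := by
      have h2 : sharp p.1 = (2:ℝ) • p.2 - (2:ℝ) • q.2 - sharp q.1 := by
        linear_combination (norm := module) (-2:ℝ) • hcomp
      rw [h2]
      exact F₀.sub_mem (F₀.sub_mem (F₀.smul_mem _ hpF) (F₀.smul_mem _ hqF)) hb
    rw [hw1, map_add]; exact F₀.add_mem ha hb
  · intro hco
    constructor
    · rintro p ⟨hpa, hpF⟩ q ⟨hqa, hqF⟩ _
      refine ⟨fun ζ hζ => ?_, F₀.sub_mem hpF (F₀.smul_mem _ (hco _ hqa))⟩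
      simp [hpa ζ hζ, hqa ζ hζ]
    · rintro ⟨w, ζ⟩ ⟨hw, hζ⟩
      refine ⟨(w, ζ), ⟨hw, hζ⟩, (0, ζ - ((1:ℝ)/2) • sharp w),
        ⟨by simp [Set.mem_setOf_eq], F₀.sub_mem hζ (F₀.smul_mem _ (hco _ hw))⟩, ?_, ?_⟩ <;>
        simp
end

section
/- Let g be a real Lie algebra admitting a basis (X, Y, Z) with brackets [X,Y] = 0, [Y,Z] = X, and [X,Z] = −Y. Then the Lie algebra ideals of g are exactly: the zero ideal, g itself, and the two-dimensional subspace spanned by X and Y. In particular, span{X,Y} is the unique nonzero proper Lie ideal of g. -/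
/-!
Write `X, Y, Z` for `b 0, b 1, b 2`, so that `g` is the Euclidean algebra `so(2) ⋉ ℝ²`.
The plane `span{X, Y}` is abelian and `ad Z` acts on it as the rotation `X ↦ Y ↦ -X`,
while `ad X` and `ad Y` map `g` into it; hence it is an ideal.
A nonzero ideal `I` contains both `X` and `Y`: if some `w ∈ I` has a `Z`-component `c ≠ 0`, then
`⁅w, X⁆ = c • Y` and `⁅w, Y⁆ = -c • X`; otherwise `I` contains some `v = p • X + q • Y ≠ 0`,
together with its rotation `⁅Z, v⁆ = p • Y - q • X`, and these span the plane because
`p² + q² ≠ 0` (this is where the order on the field enters). So `I` is the plane or, if it has an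
element with nonzero `Z`-component, everything.
-/

namespace LieAlgebra

open Submodule

variable {K g : Type*} [Field K] [LieRing g] [LieAlgebra K g] {b : Module.Basis (Fin 3) K g}

variable (b) in
theorem basis_fin_three_repr_eq (v : g) :
    b.repr v 0 • b 0 + b.repr v 1 • b 1 + b.repr v 2 • b 2 = v := by
  simpa only [Fin.sum_univ_three] using b.sum_repr v

theorem lie_basis_zero_eq (hXY : ⁅b 0, b 1⁆ = 0) (hXZ : ⁅b 0, b 2⁆ = -(b 1)) (x : g) :
    ⁅x, b 0⁆ = b.repr x 2 • b 1 := by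
  conv_lhs => rw [← basis_fin_three_repr_eq b x]
  rw [add_lie, add_lie, smul_lie, smul_lie, smul_lie, lie_self, ← lie_skew (b 1) (b 0),
    ← lie_skew (b 2) (b 0), hXY, hXZ]
  simp

theorem lie_basis_one_eq (hXY : ⁅b 0, b 1⁆ = 0) (hYZ : ⁅b 1, b 2⁆ = b 0) (x : g) :
    ⁅x, b 1⁆ = -(b.repr x 2 • b 0) := by
  conv_lhs => rw [← basis_fin_three_repr_eq b x]
  rw [add_lie, add_lie, smul_lie, smul_lie, smul_lie, lie_self, ← lie_skew (b 2) (b 1), hXY, hYZ]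
  simp

theorem lie_basis_two_pair_eq (hYZ : ⁅b 1, b 2⁆ = b 0) (hXZ : ⁅b 0, b 2⁆ = -(b 1)) (p q : K) :
    ⁅b 2, p • b 0 + q • b 1⁆ = p • b 1 - q • b 0 := by
  rw [← lie_skew, add_lie, smul_lie, smul_lie, hXZ, hYZ]
  module

theorem mem_span_pair_iff_repr_two_eq_zero {v : g} :
    v ∈ span K {b 0, b 1} ↔ b.repr v 2 = 0 := by
  constructor
  · intro hv
    obtain ⟨p, q, rfl⟩ := mem_span_pair.mp hv
    simp
  · intro hv
    rw [← basis_fin_three_repr_eq b v, hv, zero_smul, add_zero]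
    exact add_mem (smul_mem _ _ (subset_span (by simp))) (smul_mem _ _ (subset_span (by simp)))

variable (b) in
def spanPairIdeal (hXY : ⁅b 0, b 1⁆ = 0) (hYZ : ⁅b 1, b 2⁆ = b 0)
    (hXZ : ⁅b 0, b 2⁆ = -(b 1)) : LieIdeal K g where
  toSubmodule := span K {b 0, b 1}
  lie_mem {x m} hm := by
    obtain ⟨p, q, rfl⟩ := mem_span_pair.mp hm
    show _ ∈ span K {b 0, b 1}
    rw [lie_add, lie_smul, lie_smul, lie_basis_zero_eq hXY hXZ, lie_basis_one_eq hXY hYZ,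
      mem_span_pair_iff_repr_two_eq_zero]
    simp

section Ideals

variable {I : LieIdeal K g}

theorem basis_zero_mem_and_basis_one_mem_of_repr_two_ne_zero (hXY : ⁅b 0, b 1⁆ = 0)
    (hYZ : ⁅b 1, b 2⁆ = b 0) (hXZ : ⁅b 0, b 2⁆ = -(b 1)) {w : g} (hw : w ∈ I)
    (hw2 : b.repr w 2 ≠ 0) : b 0 ∈ I ∧ b 1 ∈ I := by
  have h0 : b.repr w 2 • b 0 ∈ I := by
    simpa only [lie_basis_one_eq hXY hYZ, neg_mem_iff] using lie_mem_left K g I w (b 1) hw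
  have h1 : b.repr w 2 • b 1 ∈ I := lie_basis_zero_eq hXY hXZ w ▸ lie_mem_left K g I w (b 0) hw
  exact ⟨(smul_mem_iff (I : Submodule K g) hw2).mp h0, (smul_mem_iff (I : Submodule K g) hw2).mp h1⟩

theorem basis_zero_mem_and_basis_one_mem_of_mem_span_pair [LinearOrder K] [IsStrictOrderedRing K]
    (hYZ : ⁅b 1, b 2⁆ = b 0) (hXZ : ⁅b 0, b 2⁆ = -(b 1)) {v : g} (hv : v ∈ I) (hv0 : v ≠ 0)
    (hvXY : v ∈ span K {b 0, b 1}) : b 0 ∈ I ∧ b 1 ∈ I := by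
  obtain ⟨p, q, rfl⟩ := mem_span_pair.mp hvXY
  have hrot : p • b 1 - q • b 0 ∈ I := lie_basis_two_pair_eq hYZ hXZ p q ▸ I.lie_mem hv
  have hpq : p * p + q * q ≠ 0 := by
    intro h
    obtain ⟨rfl, rfl⟩ := mul_self_add_mul_self_eq_zero.mp h
    simp at hv0
  refine ⟨(smul_mem_iff (I : Submodule K g) hpq).mp ?_,
    (smul_mem_iff (I : Submodule K g) hpq).mp ?_⟩
  · have e : (p * p + q * q) • b 0 = p • (p • b 0 + q • b 1) - q • (p • b 1 - q • b 0) := by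
      module
    exact e ▸ sub_mem (I.smul_mem p hv) (I.smul_mem q hrot)
  · have e : (p * p + q * q) • b 1 = q • (p • b 0 + q • b 1) + p • (p • b 1 - q • b 0) := by
      module
    exact e ▸ add_mem (I.smul_mem q hv) (I.smul_mem p hrot)

theorem span_pair_le_of_ne_bot [LinearOrder K] [IsStrictOrderedRing K] (hXY : ⁅b 0, b 1⁆ = 0)
    (hYZ : ⁅b 1, b 2⁆ = b 0) (hXZ : ⁅b 0, b 2⁆ = -(b 1)) (hI : (I : Submodule K g) ≠ ⊥) :
    span K {b 0, b 1} ≤ (I : Submodule K g) := by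
  obtain ⟨v, hv, hv0⟩ := (Submodule.ne_bot_iff _).mp hI
  obtain ⟨hX, hY⟩ : b 0 ∈ I ∧ b 1 ∈ I := by
    by_cases hv2 : b.repr v 2 = 0
    · exact basis_zero_mem_and_basis_one_mem_of_mem_span_pair hYZ hXZ hv hv0
        (mem_span_pair_iff_repr_two_eq_zero.mpr hv2)
    · exact basis_zero_mem_and_basis_one_mem_of_repr_two_ne_zero hXY hYZ hXZ hv hv2
  exact span_le.mpr (Set.pair_subset hX hY)

theorem eq_top_of_not_le_span_pair (hXY : ⁅b 0, b 1⁆ = 0) (hYZ : ⁅b 1, b 2⁆ = b 0)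
    (hXZ : ⁅b 0, b 2⁆ = -(b 1)) (hI : ¬(I : Submodule K g) ≤ span K {b 0, b 1}) :
    (I : Submodule K g) = ⊤ := by
  obtain ⟨w, hw, hwXY⟩ := SetLike.not_le_iff_exists.mp hI
  have hw2 : b.repr w 2 ≠ 0 := mt mem_span_pair_iff_repr_two_eq_zero.mpr hwXY
  obtain ⟨hX, hY⟩ := basis_zero_mem_and_basis_one_mem_of_repr_two_ne_zero hXY hYZ hXZ hw hw2
  have hZ : b 2 ∈ I := by
    have e : b.repr w 2 • b 2 = w - b.repr w 0 • b 0 - b.repr w 1 • b 1 := by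
      linear_combination (norm := module) basis_fin_three_repr_eq b w
    refine (smul_mem_iff (I : Submodule K g) hw2).mp ?_
    exact e ▸ sub_mem (sub_mem hw (I.smul_mem _ hX)) (I.smul_mem _ hY)
  refine eq_top_iff'.mpr fun x => ?_
  rw [← basis_fin_three_repr_eq b x]
  exact add_mem (add_mem (I.smul_mem _ hX) (I.smul_mem _ hY)) (I.smul_mem _ hZ)

end Ideals

end LieAlgebra

/-- If a real Lie algebra `g` has a basis `(X,Y,Z)` with `[X,Y] = 0`,
`[Y,Z] = X`, `[X,Z] = -Y`, then its Lie ideals are exactly `⊥`, `⊤`, and `span{X,Y}`;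
in particular `span{X,Y}` is the unique nonzero proper Lie ideal. -/
theorem stmt4 {g : Type*} [LieRing g] [LieAlgebra ℝ g]
    (b : Module.Basis (Fin 3) ℝ g)
    (hXY : ⁅b 0, b 1⁆ = 0) (hYZ : ⁅b 1, b 2⁆ = b 0) (hXZ : ⁅b 0, b 2⁆ = -(b 1)) :
    (∃ I : LieIdeal ℝ g, (I : Submodule ℝ g) = Submodule.span ℝ {b 0, b 1}) ∧
    (∀ I : LieIdeal ℝ g,
      (I : Submodule ℝ g) = ⊥ ∨ (I : Submodule ℝ g) = ⊤ ∨
        (I : Submodule ℝ g) = Submodule.span ℝ {b 0, b 1}) ∧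
    Submodule.span ℝ ({b 0, b 1} : Set g) ≠ ⊥ ∧
    Submodule.span ℝ ({b 0, b 1} : Set g) ≠ ⊤ := by
  refine ⟨⟨LieAlgebra.spanPairIdeal b hXY hYZ hXZ, rfl⟩, fun I => ?_, ?_, ?_⟩
  · by_cases hbot : (I : Submodule ℝ g) = ⊥
    · exact .inl hbot
    by_cases hle : (I : Submodule ℝ g) ≤ Submodule.span ℝ {b 0, b 1}
    · exact .inr (.inr (le_antisymm hle (LieAlgebra.span_pair_le_of_ne_bot hXY hYZ hXZ hbot)))
    · exact .inr (.inl (LieAlgebra.eq_top_of_not_le_span_pair hXY hYZ hXZ hle))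
  · exact fun h => b.ne_zero 0 (Submodule.span_eq_bot.mp h _ (by simp))
  · intro h
    have hZ := LieAlgebra.mem_span_pair_iff_repr_two_eq_zero.mp (h ▸ Submodule.mem_top : b 2 ∈ _)
    simp at hZ
end
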